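/- Let K, σ, S > 0 and r ∈ ℝ. For t̃ > 0 define d₁(t̃) = (log(S/K) + (r + σ²/2) t̃²)/(σ t̃), d₂(t̃) = d₁(t̃) − σ t̃, and C̃(t̃) = S Φ(d₁(t̃)) − K e^{−r t̃²} Φ(d₂(t̃)), where Φ is the standard normal cumulative distribution function. Then C̃ is twice differentiable on (0, ∞) and the second derivative C̃″(t̃) has a finite limit as t̃ → 0⁺. -/

import Mathlib

/-- The standard normal cumulative distribution function
`Φ(x) = (2π)^{-1/2} ∫_{-∞}^x e^{-u²/2} du`. -/
noncomputable def stdCDF (x : ℝ) : ℝ :=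
  (Real.sqrt (2 * Real.pi))⁻¹ * ∫ u in Set.Iic x, Real.exp (-u ^ 2 / 2)

/-!
With `d₁(t) = p/t + q t`, `p = log(S/K)/σ`, `q = (r + σ²/2)/σ`, the identity
`S φ(d₁) = K e^{-rt²} φ(d₂)` cancels the density terms of `C̃'`, leaving
`C̃' = σ S φ(d₁) + 2rK t e^{-rt²} Φ(d₂)`. Differentiating once more,
`C̃'' = S φ(d₁) (σp² t⁻³ − 2rp t⁻¹ + c t) + 2rK (1 − 2rt²) e^{-rt²} Φ(d₂)`.
Every singular term carries a factor `p`, and for `p ≠ 0` the Gaussian factor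
`φ(p/t + q t) = c(t) exp(−p²/(2t²))` beats any power of `t⁻¹`; finally `Φ(d₂)` converges
because `d₂` tends to `±∞` (or to `0` when `S = K`).
-/

open Real Filter Set Topology MeasureTheory ProbabilityTheory

lemma gaussianPDFReal_zero_one (x : ℝ) :
    gaussianPDFReal 0 1 x = (√(2 * π))⁻¹ * exp (-x ^ 2 / 2) := by
  simp [gaussianPDFReal]

lemma gaussianPDFReal_zero_one_le_one (x : ℝ) : gaussianPDFReal 0 1 x ≤ 1 := by
  rw [gaussianPDFReal_zero_one]
  have h2π : 1 ≤ √(2 * π) := one_le_sqrt.2 (by linarith [pi_gt_three])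
  have hexp : exp (-x ^ 2 / 2) ≤ 1 := exp_le_one_iff.2 (by nlinarith [sq_nonneg x])
  exact mul_le_one₀ (inv_le_one_of_one_le₀ h2π) (exp_pos _).le hexp

lemma gaussianPDFReal_zero_one_sub (x s : ℝ) :
    gaussianPDFReal 0 1 (x - s) = exp (x * s - s ^ 2 / 2) * gaussianPDFReal 0 1 x := by
  simp only [gaussianPDFReal_zero_one]
  rw [mul_left_comm, ← exp_add]
  ring_nf

lemma hasDerivAt_gaussianPDFReal_zero_one (x : ℝ) :
    HasDerivAt (gaussianPDFReal 0 1) (-x * gaussianPDFReal 0 1 x) x := by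
  have h : HasDerivAt (fun y => -y ^ 2 / 2) (-(2 * x) / 2) x := by
    simpa using ((hasDerivAt_pow 2 x).neg).div_const 2
  rw [funext gaussianPDFReal_zero_one]
  exact ((h.exp).const_mul (√(2 * π))⁻¹).congr_deriv (by ring)

lemma hasDerivAt_integral_Iic {E : Type*} [NormedAddCommGroup E] [NormedSpace ℝ E]
    [CompleteSpace E] {f : ℝ → E} (hf : Integrable f) (hc : Continuous f) (x : ℝ) :
    HasDerivAt (fun y => ∫ u in Iic y, f u) (f x) x := by
  have hsplit : ∀ y, ∫ u in Iic y, f u = (∫ u in Iic 0, f u) + ∫ u in (0 : ℝ)..y, f u :=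
    fun y => by
      rw [← intervalIntegral.integral_Iic_sub_Iic hf.integrableOn hf.integrableOn,
        add_sub_cancel]
  rw [funext hsplit]
  exact (intervalIntegral.integral_hasDerivAt_right hf.intervalIntegrable
    hc.aestronglyMeasurable.stronglyMeasurableAtFilter hc.continuousAt).const_add _

lemma stdCDF_eq_integral (x : ℝ) : stdCDF x = ∫ u in Iic x, gaussianPDFReal 0 1 u := by
  simp only [stdCDF, gaussianPDFReal_zero_one, integral_const_mul]

lemma hasDerivAt_stdCDF (x : ℝ) : HasDerivAt stdCDF (gaussianPDFReal 0 1 x) x := by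
  rw [funext stdCDF_eq_integral]
  exact hasDerivAt_integral_Iic (integrable_gaussianPDFReal 0 1)
    (by rw [funext gaussianPDFReal_zero_one]; fun_prop) x

lemma stdCDF_eq_cdf : stdCDF = cdf (gaussianReal 0 1) := funext fun x => by
  rw [cdf_eq_real, measureReal_def, gaussianReal_apply_eq_integral _ one_ne_zero,
    ENNReal.toReal_ofReal (setIntegral_nonneg measurableSet_Iic fun u _ =>
      gaussianPDFReal_nonneg 0 1 u), stdCDF_eq_integral]

lemma tendsto_inv_pow_mul_exp_neg_mul_inv_sq {b : ℝ} (hb : 0 < b) (n : ℕ) :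
    Tendsto (fun t : ℝ => t⁻¹ ^ n * exp (-b * t⁻¹ ^ 2)) (𝓝[>] 0) (𝓝 0) := by
  have hsq : Tendsto (fun t : ℝ => t⁻¹ ^ 2) (𝓝[>] 0) atTop :=
    (tendsto_pow_atTop two_ne_zero).comp tendsto_inv_nhdsGT_zero
  refine ((tendsto_rpow_mul_exp_neg_mul_atTop_nhds_zero (n / 2) b hb).comp hsq).congr' ?_
  filter_upwards [self_mem_nhdsWithin] with t (ht : 0 < t)
  have hpow : (t⁻¹ ^ 2) ^ (n / 2 : ℝ) = t⁻¹ ^ n := by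
    rw [← rpow_natCast t⁻¹ 2, ← rpow_mul (by positivity), Nat.cast_ofNat,
      mul_div_cancel₀ _ two_ne_zero, rpow_natCast]
  rw [Function.comp_apply, hpow]

lemma add_mul_sq_div_mul (a m σ t : ℝ) :
    (a + m * t ^ 2) / (σ * t) = a / σ * t⁻¹ + m / σ * t := by
  rcases eq_or_ne t 0 with rfl | ht
  · simp
  rcases eq_or_ne σ 0 with rfl | hσ
  · simp
  field_simp

lemma hasDerivAt_mul_inv_add_mul (p q : ℝ) {t : ℝ} (ht : t ≠ 0) :
    HasDerivAt (fun t => p * t⁻¹ + q * t) (q - p * t⁻¹ ^ 2) t :=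
  (((hasDerivAt_inv ht).const_mul p).add ((hasDerivAt_id t).const_mul q)).congr_deriv
    (by rw [inv_pow]; ring)

lemma exists_tendsto_stdCDF_mul_inv_add_mul (p q : ℝ) :
    ∃ l, Tendsto (fun t => stdCDF (p * t⁻¹ + q * t)) (𝓝[>] 0) (𝓝 l) := by
  have hlin : Tendsto (fun t : ℝ => q * t) (𝓝[>] 0) (𝓝 0) := by
    simpa using ((continuous_const_mul q).tendsto 0).mono_left nhdsWithin_le_nhds
  rcases lt_trichotomy p 0 with hp | rfl | hp
  · have hd : Tendsto (fun t => p * t⁻¹ + q * t) (𝓝[>] 0) atBot :=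
      ((tendsto_const_mul_atBot_of_neg hp).2 tendsto_inv_nhdsGT_zero).atBot_add hlin
    exact ⟨0, stdCDF_eq_cdf ▸ (tendsto_cdf_atBot _).comp hd⟩
  · have hΦ : Continuous stdCDF := continuous_iff_continuousAt.2 fun x =>
      (hasDerivAt_stdCDF x).continuousAt
    simp only [zero_mul, zero_add]
    exact ⟨_, (hΦ.tendsto 0).comp hlin⟩
  · have hd : Tendsto (fun t => p * t⁻¹ + q * t) (𝓝[>] 0) atTop :=
      (tendsto_inv_nhdsGT_zero.const_mul_atTop hp).atTop_add hlin
    exact ⟨1, stdCDF_eq_cdf ▸ (tendsto_cdf_atTop _).comp hd⟩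

lemma tendsto_mul_inv_pow_mul_gaussianPDFReal (p q : ℝ) (n : ℕ) :
    Tendsto (fun t => p * t⁻¹ ^ n * gaussianPDFReal 0 1 (p * t⁻¹ + q * t)) (𝓝[>] 0) (𝓝 0) := by
  rcases eq_or_ne p 0 with rfl | hp
  · simp
  have hfactor : ∀ t : ℝ, t ≠ 0 → p * t⁻¹ ^ n * gaussianPDFReal 0 1 (p * t⁻¹ + q * t) =
      p * (√(2 * π))⁻¹ * exp (-(p * q) - q ^ 2 * t ^ 2 / 2) *
        (t⁻¹ ^ n * exp (-(p ^ 2 / 2) * t⁻¹ ^ 2)) := fun t ht => by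
    have hexp : exp (-(p * t⁻¹ + q * t) ^ 2 / 2) =
        exp (-(p * q) - q ^ 2 * t ^ 2 / 2) * exp (-(p ^ 2 / 2) * t⁻¹ ^ 2) := by
      rw [← exp_add]
      congr 1
      field_simp
      ring
    rw [gaussianPDFReal_zero_one, hexp]
    ring
  have hcont : Continuous fun t : ℝ => p * (√(2 * π))⁻¹ * exp (-(p * q) - q ^ 2 * t ^ 2 / 2) := by
    fun_prop
  have hlim := ((hcont.tendsto 0).mono_left nhdsWithin_le_nhds).mul
    (tendsto_inv_pow_mul_exp_neg_mul_inv_sq (by positivity : 0 < p ^ 2 / 2) n)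
  rw [mul_zero] at hlim
  refine hlim.congr' ?_
  filter_upwards [self_mem_nhdsWithin] with t (ht : 0 < t)
  exact (hfactor t ht.ne').symm

lemma tendsto_mul_gaussianPDFReal (f : ℝ → ℝ) :
    Tendsto (fun t => t * gaussianPDFReal 0 1 (f t)) (𝓝 0) (𝓝 0) := by
  refine squeeze_zero_norm (fun t => ?_) tendsto_norm_zero
  rw [norm_mul, Real.norm_of_nonneg (gaussianPDFReal_nonneg 0 1 _)]
  exact mul_le_of_le_one_right (norm_nonneg t) (gaussianPDFReal_zero_one_le_one _)

noncomputable def callPrice (S K σ r p q t : ℝ) : ℝ :=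
  S * stdCDF (p * t⁻¹ + q * t) - K * exp (-r * t ^ 2) * stdCDF (p * t⁻¹ + (q - σ) * t)

noncomputable def callPriceDeriv (S K σ r p q t : ℝ) : ℝ :=
  σ * S * gaussianPDFReal 0 1 (p * t⁻¹ + q * t)
    + 2 * r * K * t * exp (-r * t ^ 2) * stdCDF (p * t⁻¹ + (q - σ) * t)

noncomputable def callPriceDeriv2 (S K σ r p q t : ℝ) : ℝ :=
  S * gaussianPDFReal 0 1 (p * t⁻¹ + q * t)
      * (σ * p ^ 2 * t⁻¹ ^ 3 - 2 * r * p * t⁻¹ + (2 * r * (q - σ) - σ * q ^ 2) * t)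
    + 2 * r * K * (1 - 2 * r * t ^ 2) * exp (-r * t ^ 2) * stdCDF (p * t⁻¹ + (q - σ) * t)

section CallPrice

variable {S K σ r p q t : ℝ}

lemma strike_mul_exp_mul_gaussianPDFReal (hS : S = K * exp (σ * p))
    (hq : σ * q = r + σ ^ 2 / 2) (ht : t ≠ 0) :
    K * exp (-r * t ^ 2) * gaussianPDFReal 0 1 (p * t⁻¹ + (q - σ) * t)
      = S * gaussianPDFReal 0 1 (p * t⁻¹ + q * t) := by
  have hexp : exp (-r * t ^ 2) * exp ((p * t⁻¹ + q * t) * (σ * t) - (σ * t) ^ 2 / 2)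
      = exp (σ * p) := by
    rw [← exp_add]
    congr 1
    field_simp
    linear_combination 2 * t ^ 2 * hq
  rw [show p * t⁻¹ + (q - σ) * t = p * t⁻¹ + q * t - σ * t by ring,
    gaussianPDFReal_zero_one_sub, hS, ← hexp]
  ring

lemma hasDerivAt_exp_neg_mul_sq (r t : ℝ) :
    HasDerivAt (fun t => exp (-r * t ^ 2)) (-2 * r * t * exp (-r * t ^ 2)) t :=
  (((hasDerivAt_pow 2 t).const_mul (-r)).exp).congr_deriv (by push_cast; ring)

lemma hasDerivAt_callPrice (hS : S = K * exp (σ * p)) (hq : σ * q = r + σ ^ 2 / 2)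
    (ht : t ≠ 0) :
    HasDerivAt (callPrice S K σ r p q) (callPriceDeriv S K σ r p q t) t := by
  have hΦ₁ := ((hasDerivAt_stdCDF _).comp t (hasDerivAt_mul_inv_add_mul p q ht)).const_mul S
  have hΦ₂ := ((hasDerivAt_exp_neg_mul_sq r t).const_mul K).mul
    ((hasDerivAt_stdCDF _).comp t (hasDerivAt_mul_inv_add_mul p (q - σ) ht))
  refine (hΦ₁.sub hΦ₂).congr_deriv ?_
  simp only [callPriceDeriv, Function.comp_apply]
  linear_combination -(q - σ - p * t⁻¹ ^ 2) * strike_mul_exp_mul_gaussianPDFReal hS hq ht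

lemma hasDerivAt_callPriceDeriv (hS : S = K * exp (σ * p)) (hq : σ * q = r + σ ^ 2 / 2)
    (ht : t ≠ 0) :
    HasDerivAt (callPriceDeriv S K σ r p q) (callPriceDeriv2 S K σ r p q t) t := by
  have hφ₁ := ((hasDerivAt_gaussianPDFReal_zero_one _).comp t
    (hasDerivAt_mul_inv_add_mul p q ht)).const_mul (σ * S)
  have hΦ₂ := ((((hasDerivAt_id t).const_mul (2 * r * K)).mul (hasDerivAt_exp_neg_mul_sq r t)).mul
    ((hasDerivAt_stdCDF _).comp t (hasDerivAt_mul_inv_add_mul p (q - σ) ht)))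
  refine (hφ₁.add hΦ₂).congr_deriv ?_
  simp only [callPriceDeriv2, Function.comp_apply, Pi.mul_apply, id]
  have hinv : t * t⁻¹ = 1 := mul_inv_cancel₀ ht
  linear_combination
    (2 * r * t * (q - σ - p * t⁻¹ ^ 2)) * strike_mul_exp_mul_gaussianPDFReal hS hq ht
    + S * gaussianPDFReal 0 1 (p * t⁻¹ + q * t) * p * (σ * q - 2 * r) * t⁻¹ * hinv

end CallPrice

lemma exists_tendsto_callPriceDeriv2 (S K σ r p q : ℝ) :
    ∃ L, Tendsto (callPriceDeriv2 S K σ r p q) (𝓝[>] 0) (𝓝 L) := by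
  obtain ⟨l, hl⟩ := exists_tendsto_stdCDF_mul_inv_add_mul p (q - σ)
  have h₃ := tendsto_mul_inv_pow_mul_gaussianPDFReal p q 3
  have h₁ := tendsto_mul_inv_pow_mul_gaussianPDFReal p q 1
  have h₀ := (tendsto_mul_gaussianPDFReal fun t => p * t⁻¹ + q * t).mono_left
    (nhdsWithin_le_nhds (s := Ioi 0))
  have hdisc : Tendsto (fun t : ℝ => 2 * r * K * (1 - 2 * r * t ^ 2) * exp (-r * t ^ 2))
      (𝓝[>] 0) (𝓝 (2 * r * K)) := by
    have hc : Continuous fun t : ℝ => 2 * r * K * (1 - 2 * r * t ^ 2) * exp (-r * t ^ 2) := by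
      fun_prop
    simpa using (hc.tendsto 0).mono_left nhdsWithin_le_nhds
  refine ⟨_, (((((h₃.const_mul (σ * p)).sub (h₁.const_mul (2 * r))).add
    (h₀.const_mul (2 * r * (q - σ) - σ * q ^ 2))).const_mul S).add (hdisc.mul hl)).congr ?_⟩
  intro t
  simp only [callPriceDeriv2]
  ring

/-- the time-changed Black–Scholes call value
`C̃(t̃) = S Φ(d₁(t̃)) − K e^{−rt̃²} Φ(d₂(t̃))` is twice differentiable on `(0,∞)`
and its second derivative has a finite limit as `t̃ → 0⁺`. -/
theorem stmt19 (K σ S r : ℝ) (hK : 0 < K) (hσ : 0 < σ) (hS : 0 < S)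
    (d₁ d₂ C : ℝ → ℝ)
    (hd₁ : ∀ t : ℝ, d₁ t = (Real.log (S / K) + (r + σ ^ 2 / 2) * t ^ 2) / (σ * t))
    (hd₂ : ∀ t : ℝ, d₂ t = d₁ t - σ * t)
    (hC : ∀ t : ℝ, C t = S * stdCDF (d₁ t) - K * Real.exp (-r * t ^ 2) * stdCDF (d₂ t)) :
    (∀ t : ℝ, 0 < t → DifferentiableAt ℝ C t) ∧
    (∀ t : ℝ, 0 < t → DifferentiableAt ℝ (deriv C) t) ∧
    ∃ L : ℝ, Filter.Tendsto (deriv (deriv C)) (nhdsWithin 0 (Set.Ioi 0)) (nhds L) := by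
  obtain rfl : C = callPrice S K σ r (log (S / K) / σ) ((r + σ ^ 2 / 2) / σ) :=
    funext fun t => by rw [hC, hd₂, hd₁, callPrice, add_mul_sq_div_mul, sub_mul, add_sub_assoc]
  set p := log (S / K) / σ
  set q := (r + σ ^ 2 / 2) / σ
  have hSK : S = K * exp (σ * p) := by
    rw [mul_div_cancel₀ _ hσ.ne', exp_log (div_pos hS hK), mul_div_cancel₀ _ hK.ne']
  have hq : σ * q = r + σ ^ 2 / 2 := mul_div_cancel₀ _ hσ.ne'
  have hderiv : ∀ t, 0 < t →
      deriv (callPrice S K σ r p q) =ᶠ[𝓝 t] callPriceDeriv S K σ r p q := fun t ht => by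
    filter_upwards [lt_mem_nhds ht] with s hs using (hasDerivAt_callPrice hSK hq hs.ne').deriv
  refine ⟨fun t ht => (hasDerivAt_callPrice hSK hq ht.ne').differentiableAt, fun t ht =>
    (hasDerivAt_callPriceDeriv hSK hq ht.ne').differentiableAt.congr_of_eventuallyEq (hderiv t ht),
    ?_⟩
  obtain ⟨L, hL⟩ := exists_tendsto_callPriceDeriv2 S K σ r p q
  refine ⟨L, hL.congr' ?_⟩
  filter_upwards [self_mem_nhdsWithin] with t (ht : 0 < t)
  rw [(hderiv t ht).deriv_eq, (hasDerivAt_callPriceDeriv hSK hq ht.ne').deriv]
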